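/- The chosen-ciphertext attack on El-Gamal succeeds: given the challenge ciphertext c = (g^r, (g^a)^r · m_b) for a bit b, with m₀ ≠ m₁ and q ≠ 1, the decryption d of c' = (c₁, q·c₂) satisfies d / q = m_b, and hence b is uniquely determined by comparing d/q with m₀ and m₁. -/
import Mathlib


/-- The chosen-ciphertext attack on El-Gamal succeeds: the mauled decryption divided
by q equals the challenge message, which determines the bit b. -/
theorem elgamal_cca_attack {G : Type*} [CommGroup G] (g : G) (a r : ℤ)
    (m₀ m₁ : G) (hm : m₀ ≠ m₁) (b : Bool) (q : G) (hq : q ≠ 1) :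
    let mb := if b then m₁ else m₀
    let d := (q * ((g ^ a) ^ r * mb)) * ((g ^ r) ^ a)⁻¹
    d * q⁻¹ = mb ∧ (d * q⁻¹ = m₁ ↔ b = true) := by
  intro mb d
  have h : d * q⁻¹ = mb := by
    simp only [d, ← zpow_mul, mul_comm r a]
    group
    simp [zpow_neg, mul_comm, mul_assoc, mul_left_comm]
  refine ⟨h, ?_⟩
  rw [h]
  cases b <;> simp [mb, hm]
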